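/- For every n ≥ 2 there exists an n×n real matrix A with nonnegative entries, a_{11} = 0, spectral radius r(A) = 1, having exactly two distinct eigenvalues, and whose spread is exactly s(A) = n/(2(n − 1)). -/

import Mathlib

open Matrix Polynomial

/-- The eigenvalues of a real square matrix: the multiset of roots (with multiplicity)
of its characteristic polynomial over `ℂ`. -/
noncomputable def eigs {n : ℕ} (A : Matrix (Fin n) (Fin n) ℝ) : Multiset ℂ :=
  ((A.map Complex.ofReal).charpoly).roots

/-- The spectral radius: the maximum of `|λ|` over the eigenvalues `λ`. -/
noncomputable def specRad {n : ℕ} (A : Matrix (Fin n) (Fin n) ℝ) : ℝ :=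
  sSup {r : ℝ | ∃ μ ∈ eigs A, r = ‖μ‖}

/-- The spread: the maximum of `|λ - μ|` over pairs of eigenvalues `λ, μ`. -/
noncomputable def spread {n : ℕ} (A : Matrix (Fin n) (Fin n) ℝ) : ℝ :=
  sSup {r : ℝ | ∃ μ ∈ eigs A, ∃ ν ∈ eigs A, r = ‖μ - ν‖}

/-!
With `m = n - 1`, `λ = (m - 1) / (2m)` and `d = (m + 1) / (2m) = λ + 1/m`, take `A = d • 1 + C`,
where `C` is the companion matrix, with the coefficients in its first row, of
`q(y) = (y + 1/m)^m (y - λ)`. Then `χ_A(x) = q(x - d) = (x - 1)(x - λ)^m`, so the spectrum is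
`{1, λ}` and the spread is `1 - λ = n / (2(n - 1))`. The corner entry of `A` is `d - [y^m] q = 0`,
and the other first-row entries `-[y^j] q` (`j < m`) are nonnegative because
`j / m ≤ (m + 1 - j) λ` for `j < m`, with equality at `j = m - 1`: this is what pins down `λ`.
That the companion matrix of a monic `p` has characteristic polynomial `p` is read off from
multiplication by `X` on `K[X] / (p)`, whose matrix in the basis `1, X, …, X^(deg p - 1)` it is.
-/

section Companion

variable {K : Type*} [Field K]

def companion (p : K[X]) (n : ℕ) : Matrix (Fin n) (Fin n) K :=
  of fun i j => (if (i : ℕ) = j + 1 then 1 else 0) - if (j : ℕ) + 1 = n then p.coeff i else 0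

theorem coeff_X_pow_modByMonic {p : K[X]} (hp : p.Monic) {k i : ℕ} (hk : k ≤ p.natDegree) :
    (X ^ k %ₘ p).coeff i = (if i = k then 1 else 0) - if k = p.natDegree then p.coeff i else 0 := by
  rcases hk.lt_or_eq with hk | rfl
  · have hdeg : degree (X ^ k : K[X]) < degree p := by
      rw [degree_X_pow, degree_eq_natDegree hp.ne_zero]
      exact_mod_cast hk
    rw [(modByMonic_eq_self_iff hp).mpr hdeg, coeff_X_pow, if_neg hk.ne, sub_zero]
  · have hdeg : degree (X ^ p.natDegree - p) < degree p := by
      have hX : degree (X ^ p.natDegree : K[X]) = degree p := by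
        rw [degree_X_pow, degree_eq_natDegree hp.ne_zero]
      exact hX ▸ degree_sub_lt_left hX (pow_ne_zero _ X_ne_zero)
        (by rw [leadingCoeff_X_pow, hp.leadingCoeff])
    rw [(div_modByMonic_unique 1 _ hp ⟨by ring, hdeg⟩).2, coeff_sub, coeff_X_pow, if_pos rfl]

theorem leftMulMatrix_powerBasis'_gen_apply {p : K[X]} (hp : p.Monic)
    (i j : Fin (AdjoinRoot.powerBasis' hp).dim) :
    Algebra.leftMulMatrix (AdjoinRoot.powerBasis' hp).basis (AdjoinRoot.powerBasis' hp).gen i j =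
      (X ^ ((j : ℕ) + 1) %ₘ p).coeff i := by
  rw [Algebra.leftMulMatrix_eq_repr_mul, PowerBasis.coe_basis]
  change (AdjoinRoot.powerBasisAux' hp).repr (AdjoinRoot.root p * AdjoinRoot.root p ^ (j : ℕ)) i = _
  rw [← pow_succ', ← AdjoinRoot.mk_X, ← map_pow]
  exact AdjoinRoot.powerBasisAux'_repr_apply_to_fun hp _ i

theorem charpoly_companion {p : K[X]} (hp : p.Monic) {n : ℕ} (hn : p.natDegree = n) :
    (companion p n).charpoly = p := by
  rw [← show (AdjoinRoot.powerBasis' hp).dim = n from hn]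
  have h : companion p (AdjoinRoot.powerBasis' hp).dim =
      Algebra.leftMulMatrix (AdjoinRoot.powerBasis' hp).basis (AdjoinRoot.powerBasis' hp).gen := by
    ext i j
    rw [leftMulMatrix_powerBasis'_gen_apply, coeff_X_pow_modByMonic hp j.is_lt]
    rfl
  rw [h, charpoly_leftMulMatrix]
  simp [AdjoinRoot.minpoly_root hp.ne_zero, hp.leadingCoeff]

end Companion

theorem coeff_X_add_C_pow_mul_X_sub_C_self {R : Type*} [CommRing R] {a b : R} {m : ℕ} :
    ((X + C b) ^ m * (X - C a)).coeff m = m * b - a := by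
  rcases m with _ | m
  · simp
  · rw [coeff_mul_X_sub_C, coeff_X_add_C_pow, coeff_X_add_C_pow]
    simp [mul_comm]

theorem coeff_X_add_C_pow_mul_X_sub_C_nonpos {R : Type*} [CommRing R] [LinearOrder R]
    [IsStrictOrderedRing R] {a b : R} (ha : 0 ≤ a) (hb : 0 ≤ b) {m j : ℕ}
    (hj : j ≤ m) (hab : j * b ≤ (m + 1 - j) * a) :
    ((X + C b) ^ m * (X - C a)).coeff j ≤ 0 := by
  rcases j with _ | j
  · simp [mul_coeff_zero, coeff_X_add_C_pow]
    positivity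
  have hchoose : (m.choose (j + 1) : R) * (j + 1) = m.choose j * (m - j) := by
    rw [← Nat.cast_sub (by omega)]
    exact_mod_cast Nat.choose_succ_right_eq m j
  have hbracket : (b * m.choose j - m.choose (j + 1) * a) * (j + 1) ≤ 0 := by
    rw [show (b * m.choose j - m.choose (j + 1) * a) * (j + 1)
        = (m.choose j : R) * ((j + 1) * b - (m - j) * a) by linear_combination (-a) * hchoose]
    push_cast at hab
    exact mul_nonpos_of_nonneg_of_nonpos (by positivity) (by linarith)
  rw [coeff_mul_X_sub_C, coeff_X_add_C_pow, coeff_X_add_C_pow,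
    show m - j = m - (j + 1) + 1 by omega, pow_succ]
  calc b ^ (m - (j + 1)) * b * m.choose j - b ^ (m - (j + 1)) * m.choose (j + 1) * a
      = b ^ (m - (j + 1)) * (b * m.choose j - m.choose (j + 1) * a) := by ring
    _ ≤ 0 := mul_nonpos_of_nonneg_of_nonpos (by positivity)
      (nonpos_of_mul_nonpos_left hbracket (by positivity))

section TwoEigenvalues

variable {n : ℕ} {A : Matrix (Fin n) (Fin n) ℝ} {a b : ℝ} {m : ℕ}

theorem eigs_eq_of_charpoly_eq (h : A.charpoly = (X - C a) * (X - C b) ^ m) :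
    eigs A = (a : ℂ) ::ₘ m • {(b : ℂ)} := by
  change ((A.map Complex.ofRealHom).charpoly).roots = _
  rw [charpoly_map, h]
  simp [roots_mul, X_sub_C_ne_zero, roots_pow]

theorem mem_eigs_iff_of_charpoly_eq (h : A.charpoly = (X - C a) * (X - C b) ^ m) (hm : m ≠ 0)
    (μ : ℂ) : μ ∈ eigs A ↔ μ = a ∨ μ = b := by
  simp [eigs_eq_of_charpoly_eq h, Multiset.mem_nsmul, hm]

variable {α β : ℂ}

theorem specRad_eq_max (hA : ∀ μ, μ ∈ eigs A ↔ μ = α ∨ μ = β) : specRad A = max ‖α‖ ‖β‖ := by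
  have : {r : ℝ | ∃ μ ∈ eigs A, r = ‖μ‖} = {‖α‖, ‖β‖} := by
    ext r
    simp only [Set.mem_ofPred_eq, hA, or_and_right, exists_or, exists_eq_left, Set.mem_insert_iff,
      Set.mem_singleton_iff]
  rw [specRad, this, csSup_pair]

theorem spread_eq_norm_sub (hA : ∀ μ, μ ∈ eigs A ↔ μ = α ∨ μ = β) : spread A = ‖α - β‖ := by
  have : {r : ℝ | ∃ μ ∈ eigs A, ∃ ν ∈ eigs A, r = ‖μ - ν‖} = {0, ‖α - β‖} := by
    ext r
    simp only [Set.mem_ofPred_eq, hA, or_and_right, exists_or, exists_eq_left, sub_self, norm_zero,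
      norm_sub_rev β α, Set.mem_insert_iff, Set.mem_singleton_iff]
    tauto
  rw [spread, this, csSup_pair]
  exact sup_eq_right.mpr (norm_nonneg _)

theorem card_eigs_toFinset (hA : ∀ μ, μ ∈ eigs A ↔ μ = α ∨ μ = β) (hαβ : α ≠ β) : (eigs A).toFinset.card = 2 := by
  have : (eigs A).toFinset = {α, β} := by ext μ; simp [hA]
  rw [this, Finset.card_pair hαβ]

end TwoEigenvalues

section Extremal

variable {m : ℕ}

noncomputable def extremalEigenvalue (m : ℕ) : ℝ := (m - 1) / (2 * m)

noncomputable def extremalShift (m : ℕ) : ℝ := (m + 1) / (2 * m)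

noncomputable def extremalPoly (m : ℕ) : ℝ[X] :=
  (X + C (1 / m : ℝ)) ^ m * (X - C (extremalEigenvalue m))

-- Transposing and reversing the indices moves the coefficients of `companion` from the last
-- column to the first row, with the corner entry at `(0, 0)`.
noncomputable def extremalMatrix (m : ℕ) : Matrix (Fin (m + 1)) (Fin (m + 1)) ℝ :=
  reindex Fin.revPerm Fin.revPerm (companion (extremalPoly m) (m + 1))ᵀ +
    scalar (Fin (m + 1)) (extremalShift m)

theorem extremalEigenvalue_nonneg (hm : m ≠ 0) : 0 ≤ extremalEigenvalue m := by
  have : (1 : ℝ) ≤ m := by exact_mod_cast Nat.one_le_iff_ne_zero.mpr hm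
  unfold extremalEigenvalue
  positivity

theorem extremalEigenvalue_lt_one (hm : m ≠ 0) : extremalEigenvalue m < 1 := by
  have : (1 : ℝ) ≤ m := by exact_mod_cast Nat.one_le_iff_ne_zero.mpr hm
  rw [extremalEigenvalue, div_lt_one (by positivity)]
  linarith

theorem extremalShift_nonneg : 0 ≤ extremalShift m := by
  unfold extremalShift
  positivity

theorem extremalShift_sub_inv (hm : m ≠ 0) : extremalShift m - 1 / m = extremalEigenvalue m := by
  rw [extremalShift, extremalEigenvalue]
  field_simp
  ring

theorem one_sub_extremalEigenvalue (hm : m ≠ 0) : 1 - extremalEigenvalue m = extremalShift m := by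
  rw [extremalShift, extremalEigenvalue]
  field_simp
  ring

theorem extremalPoly_monic : (extremalPoly m).Monic :=
  ((monic_X_add_C _).pow m).mul (monic_X_sub_C _)

theorem natDegree_extremalPoly : (extremalPoly m).natDegree = m + 1 := by
  rw [extremalPoly, ((monic_X_add_C _).pow m).natDegree_mul (monic_X_sub_C _),
    (monic_X_add_C _).natDegree_pow, natDegree_X_add_C, natDegree_X_sub_C, mul_one]

theorem coeff_extremalPoly_self (hm : m ≠ 0) : (extremalPoly m).coeff m = extremalShift m := by
  rw [extremalPoly, coeff_X_add_C_pow_mul_X_sub_C_self, extremalShift, extremalEigenvalue]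
  field_simp
  ring

theorem coeff_extremalPoly_nonpos (hm : m ≠ 0) {j : ℕ} (hj : j < m) :
    (extremalPoly m).coeff j ≤ 0 := by
  have hm' : (1 : ℝ) ≤ m := by exact_mod_cast Nat.one_le_iff_ne_zero.mpr hm
  have hj' : (j : ℝ) + 1 ≤ m := by exact_mod_cast hj
  apply coeff_X_add_C_pow_mul_X_sub_C_nonpos (extremalEigenvalue_nonneg hm) (by positivity) hj.le
  rw [extremalEigenvalue, mul_one_div, mul_div_assoc',
    div_le_div_iff₀ (by positivity) (by positivity)]
  have : 2 * (j : ℝ) ≤ (m + 1 - j) * (m - 1) := by nlinarith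
  nlinarith

theorem charpoly_extremalMatrix (hm : m ≠ 0) :
    (extremalMatrix m).charpoly = (X - C 1) * (X - C (extremalEigenvalue m)) ^ m := by
  have hcomp : (extremalMatrix m).charpoly.comp (X + C (extremalShift m)) = extremalPoly m := by
    rw [← charpoly_sub_scalar, extremalMatrix, add_sub_cancel_right, charpoly_reindex,
      charpoly_transpose, charpoly_companion extremalPoly_monic natDegree_extremalPoly]
  have hroot : X - C (extremalShift m) + C (1 / m : ℝ) = X - C (extremalEigenvalue m) := by
    rw [← extremalShift_sub_inv hm, C_sub]; ring
  have hone : X - C (extremalShift m) - C (extremalEigenvalue m) = X - C 1 := by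
    rw [← one_sub_extremalEigenvalue hm, C_sub]; ring
  calc (extremalMatrix m).charpoly
      = ((extremalMatrix m).charpoly.comp (X + C (extremalShift m))).comp
          (X - C (extremalShift m)) := by simp [comp_assoc]
    _ = (X - C 1) * (X - C (extremalEigenvalue m)) ^ m := by
      rw [hcomp, extremalPoly, mul_comp, pow_comp, add_comp, sub_comp, X_comp, C_comp, C_comp,
        hroot, hone, mul_comm]

theorem extremalMatrix_apply (i j : Fin (m + 1)) :
    extremalMatrix m i j = (if (i : ℕ) = j + 1 then 1 else 0) -
      (if (i : ℕ) = 0 then (extremalPoly m).coeff (m - j) else 0) +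
      if i = j then extremalShift m else 0 := by
  simp only [extremalMatrix, Matrix.add_apply, reindex_apply, submatrix_apply, transpose_apply,
    companion, of_apply, Fin.revPerm_symm, Fin.revPerm_apply, Fin.val_rev, scalar_apply,
    diagonal_apply]
  have hi := i.is_lt
  have hj := j.is_lt
  have hsub : m + 1 - ((j : ℕ) + 1) = m - j := by omega
  have hsucc : m - (j : ℕ) = m + 1 - ((i : ℕ) + 1) + 1 ↔ (i : ℕ) = j + 1 := by omega
  have hzero : m + 1 - ((i : ℕ) + 1) + 1 = m + 1 ↔ (i : ℕ) = 0 := by omega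
  simp only [hsub, hsucc, hzero]

theorem extremalMatrix_zero_zero (hm : m ≠ 0) : extremalMatrix m 0 0 = 0 := by
  simp [extremalMatrix_apply, coeff_extremalPoly_self hm]

theorem extremalMatrix_nonneg (hm : m ≠ 0) (i j : Fin (m + 1)) : 0 ≤ extremalMatrix m i j := by
  rcases eq_or_ne i j with rfl | hij
  · rcases eq_or_ne i 0 with rfl | hi
    · exact (extremalMatrix_zero_zero hm).ge
    rw [extremalMatrix_apply, if_neg (by omega), if_neg (Fin.val_ne_zero_iff.mpr hi), if_pos rfl]
    simpa using extremalShift_nonneg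
  rw [extremalMatrix_apply, if_neg hij, add_zero]
  by_cases hi : (i : ℕ) = 0
  · have hj : (j : ℕ) ≠ 0 := fun hj => hij (Fin.ext (hi.trans hj.symm))
    have := coeff_extremalPoly_nonpos hm (j := m - j) (by omega)
    rw [if_pos hi, if_neg (by omega)]
    linarith
  · rw [if_neg hi, sub_zero]
    split_ifs <;> norm_num

end Extremal

theorem exists_extremal_matrix (n : ℕ) (hn : 2 ≤ n) :
    ∃ A : Matrix (Fin n) (Fin n) ℝ,
      (∀ i j, 0 ≤ A i j) ∧
      A ⟨0, by omega⟩ ⟨0, by omega⟩ = 0 ∧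
      specRad A = 1 ∧
      (eigs A).toFinset.card = 2 ∧
      spread A = (n : ℝ) / (2 * ((n : ℝ) - 1)) := by
  obtain ⟨m, rfl⟩ : ∃ m, n = m + 1 := ⟨n - 1, by omega⟩
  have hm : m ≠ 0 := by omega
  have hspec := mem_eigs_iff_of_charpoly_eq (charpoly_extremalMatrix hm) hm
  push_cast at hspec
  refine ⟨extremalMatrix m, extremalMatrix_nonneg hm, extremalMatrix_zero_zero hm,
    ?_, card_eigs_toFinset hspec ?_, ?_⟩
  · rw [specRad_eq_max hspec, norm_one, Complex.norm_real,
      Real.norm_of_nonneg (extremalEigenvalue_nonneg hm)]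
    exact max_eq_left (extremalEigenvalue_lt_one hm).le
  · exact_mod_cast (extremalEigenvalue_lt_one hm).ne'
  · rw [spread_eq_norm_sub hspec, ← Complex.ofReal_one, ← Complex.ofReal_sub, Complex.norm_real,
      one_sub_extremalEigenvalue hm, Real.norm_of_nonneg extremalShift_nonneg, extremalShift]
    push_cast
    ring
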